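/- Let X be a compact metric space, let A be a unital simple C*-algebra, let σ : X → X be a minimal homeomorphism, and let β be a strongly continuous map from X to the *-automorphisms of A. Define α : C(X,A) → C(X,A) by α(f)(x) = β_{σ^{-1}(x)}(f(σ^{-1}(x))). Then α is a *-automorphism of C(X,A) and C(X,A) is α-simple. -/

import Mathlib

/-!
The automorphism `α` is the fiberwise automorphism `f ↦ (x ↦ β x (f x))` followed by
precomposition with `σ⁻¹`. Since `*`-automorphisms of a C*-algebra are isometric, strong
continuity of `β` is joint continuity, which makes both the fiberwise map and its inverse
preserve continuity.

For `α`-simplicity, let `I` be a closed `α`-invariant ideal and `Z` the common zero set of its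
elements. Invariance gives `σ⁻¹(Z) ⊆ Z`, so if `Z` is nonempty, `⋂ₙ σ⁻ⁿ(Z)` is a nonempty
closed set with `σ`-image equal to itself; by minimality it is `X`, hence `I = 0`. If `Z` is
empty, then for every `x` the values `{f x | f ∈ I}` form a nonzero ideal of the simple
algebra `A` and are therefore dense; a partition of unity glues these local approximations
into uniform ones, and since `I` is closed, `I = C(X, A)`.
-/

open Set Function

namespace TwoSidedIdeal

lemma mem_map_of_surjective {R S F : Type*} [Ring R] [Ring S] [FunLike F R S]
    [RingHomClass F R S] {f : F} (hf : Surjective f) (I : TwoSidedIdeal R) {y : S} :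
    y ∈ I.map f ↔ ∃ x ∈ I, f x = y := by
  have h_left : ∀ a b, b ∈ f '' I → a * b ∈ f '' I := by
    rintro a _ ⟨x, hx, rfl⟩
    obtain ⟨a, rfl⟩ := hf a
    exact ⟨a * x, I.mul_mem_left _ _ hx, map_mul f a x⟩
  have h_right : ∀ b a, b ∈ f '' I → b * a ∈ f '' I := by
    rintro _ a ⟨x, hx, rfl⟩
    obtain ⟨a, rfl⟩ := hf a
    exact ⟨x * a, I.mul_mem_right _ _ hx, map_mul f x a⟩
  have himage : f '' I = (I.asIdeal.toAddSubgroup.map (f : R →+ S) : Set S) := rfl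
  rw [map, mem_span_iff_mem_addSubgroup_closure_absorbing h_left h_right, himage,
    AddSubgroup.closure_eq]
  rfl

variable {R : Type*} [Ring R] [TopologicalSpace R] [IsTopologicalRing R]

def topologicalClosure (I : TwoSidedIdeal R) : TwoSidedIdeal R :=
  .mk' (closure I) (subset_closure I.zero_mem)
    (fun ha hb => map_mem_closure₂ continuous_add ha hb fun _ ha _ hb => I.add_mem ha hb)
    (fun ha => map_mem_closure continuous_neg ha fun _ ha => I.neg_mem ha)
    (fun hb => map_mem_closure (continuous_const_mul _) hb fun _ hb => I.mul_mem_left _ _ hb)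
    (fun {_ b} hb => map_mem_closure (f := (· * b)) (continuous_mul_const b) hb
      fun _ hb => I.mul_mem_right _ _ hb)

lemma coe_topologicalClosure (I : TwoSidedIdeal R) :
    (I.topologicalClosure : Set R) = closure I :=
  coe_mk' _ _ _ _ _ _

lemma dense_of_ne_bot (hR : ∀ J : TwoSidedIdeal R, IsClosed (J : Set R) → J = ⊥ ∨ J = ⊤)
    {I : TwoSidedIdeal R} (hI : I ≠ ⊥) : Dense (I : Set R) := by
  have hclosed : IsClosed (I.topologicalClosure : Set R) := by
    rw [coe_topologicalClosure]; exact isClosed_closure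
  rcases hR _ hclosed with h | h
  · refine absurd (le_bot_iff.mp ?_) hI
    rw [← h]
    intro x hx
    rw [← SetLike.mem_coe, coe_topologicalClosure]
    exact subset_closure hx
  · rw [dense_iff_closure_eq, ← coe_topologicalClosure, h, coe_top]

end TwoSidedIdeal

namespace Homeomorph

variable {X : Type*} [TopologicalSpace X]

theorem exists_subset_image_eq_of_mapsTo (f : X ≃ₜ X) {Z : Set X} (hc : IsCompact Z)
    (hcl : IsClosed Z) (hne : Z.Nonempty) (hf : MapsTo f Z Z) :
    ∃ W ⊆ Z, W.Nonempty ∧ IsClosed W ∧ f '' W = W := by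
  set Zn : ℕ → Set X := fun n => f^[n] '' Z
  have hsucc : ∀ n, Zn (n + 1) = f '' Zn n := fun n => by
    simp only [Zn, iterate_succ', image_comp]
  have hanti : Antitone Zn := antitone_nat_of_succ_le fun n => by
    simp only [Zn, iterate_succ, image_comp]
    exact image_mono hf.image_subset
  have hZ0 : Zn 0 = Z := image_id Z
  have hclosed : ∀ n, IsClosed (Zn n) := by
    intro n
    induction n with
    | zero => exact hZ0 ▸ hcl
    | succ n ih => exact hsucc n ▸ f.isClosedMap _ ih
  refine ⟨⋂ n, Zn n, hZ0 ▸ iInter_subset Zn 0, ?_, isClosed_iInter hclosed, ?_⟩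
  · exact IsCompact.nonempty_iInter_of_sequence_nonempty_isCompact_isClosed Zn
      (fun n => hanti n.le_succ) (fun n => hne.image _) (hZ0 ▸ hc) hclosed
  · rw [image_iInter f.bijective, ← hanti.iInter_nat_add 1]
    exact iInter_congr fun n => (hsucc n).symm

theorem eq_univ_of_mapsTo_symm [CompactSpace X] {σ : X ≃ₜ X}
    (hmin : ∀ Z : Set X, IsClosed Z → σ '' Z = Z → Z = ∅ ∨ Z = univ) {Z : Set X}
    (hZ : IsClosed Z) (hne : Z.Nonempty) (hmaps : MapsTo σ.symm Z Z) : Z = univ := by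
  obtain ⟨W, hWZ, hWne, hWcl, hW⟩ :=
    σ.symm.exists_subset_image_eq_of_mapsTo hZ.isCompact hZ hne hmaps
  have hσW : σ '' W = W := by
    conv_lhs => rw [← hW]
    exact σ.toEquiv.image_symm_image W
  rcases hmin W hWcl hσW with h | h
  · exact absurd h hWne.ne_empty
  · exact eq_univ_of_univ_subset (h ▸ hWZ)

end Homeomorph

section IsometricFamily

variable {X E : Type*} [TopologicalSpace X] [PseudoMetricSpace E]

theorem continuous_uncurry_of_isometry {e : X → E → E} (hiso : ∀ x, Isometry (e x))
    (he : ∀ a, Continuous fun x => e x a) : Continuous (uncurry e) :=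
  continuous_prod_of_continuous_lipschitzWith' _ 1 (fun x => (hiso x).lipschitz) he

theorem continuous_symm_apply_of_isometry {e : X → E ≃ E} (hiso : ∀ x, Isometry (e x))
    (he : ∀ a, Continuous fun x => e x a) (a : E) : Continuous fun x => (e x).symm a := by
  refine continuous_iff_continuousAt.2 fun x₀ => ?_
  set b := (e x₀).symm a
  have hdist : (fun x => dist ((e x).symm a) b) = fun x => dist (e x₀ b) (e x b) := by
    ext x
    rw [← (hiso x).dist_eq, Equiv.apply_symm_apply, Equiv.apply_symm_apply]
  rw [ContinuousAt, tendsto_iff_dist_tendsto_zero, hdist]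
  simpa using ((continuous_const (y := e x₀ b)).dist (he b)).tendsto x₀

end IsometricFamily

namespace ContinuousMap

section SkewShift

variable {X 𝕜 A : Type*} [TopologicalSpace X] [CommSemiring 𝕜] [NormedRing A] [StarRing A]
  [ContinuousStar A] [Algebra 𝕜 A] (β : X → A ≃⋆ₐ[𝕜] A) (hiso : ∀ x, Isometry (β x))
  (hβ : ∀ a, Continuous fun x => β x a)

def fiberwiseStarAlgEquiv : C(X, A) ≃⋆ₐ[𝕜] C(X, A) where
  toFun f := ⟨fun x => β x (f x),
    (continuous_uncurry_of_isometry hiso hβ).comp (continuous_id.prodMk f.continuous)⟩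
  invFun f := ⟨fun x => (β x).symm (f x),
    (continuous_uncurry_of_isometry (e := fun x => (β x).symm)
      (fun x => (hiso x).right_inv (β x).apply_symm_apply)
      (continuous_symm_apply_of_isometry (e := fun x => (β x).toRingEquiv.toEquiv) hiso hβ)).comp
      (continuous_id.prodMk f.continuous)⟩
  left_inv f := ContinuousMap.ext fun x => (β x).symm_apply_apply (f x)
  right_inv f := ContinuousMap.ext fun x => (β x).apply_symm_apply (f x)
  map_mul' f g := ContinuousMap.ext fun x => map_mul (β x) (f x) (g x)
  map_add' f g := ContinuousMap.ext fun x => map_add (β x) (f x) (g x)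
  map_smul' c f := ContinuousMap.ext fun x => map_smul (β x) c (f x)
  map_star' f := ContinuousMap.ext fun x => map_star (β x) (f x)

def skewShift (σ : X ≃ₜ X) : C(X, A) ≃⋆ₐ[𝕜] C(X, A) :=
  (fiberwiseStarAlgEquiv β hiso hβ).trans (σ.symm.compStarAlgEquiv' 𝕜 A)

lemma skewShift_apply (σ : X ≃ₜ X) (f : C(X, A)) (x : X) :
    skewShift β hiso hβ σ f x = β (σ.symm x) (f (σ.symm x)) :=
  rfl

end SkewShift

section ZeroLocus

variable {X A : Type*} [TopologicalSpace X]

def zeroLocus [Ring A] [TopologicalSpace A] [IsTopologicalRing A] (I : TwoSidedIdeal C(X, A)) :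
    Set X :=
  {x | ∀ f ∈ I, f x = 0}

variable [NormedRing A] {I : TwoSidedIdeal C(X, A)}

lemma isClosed_zeroLocus (I : TwoSidedIdeal C(X, A)) : IsClosed (zeroLocus I) := by
  simp only [zeroLocus, ofPred_forall]
  exact isClosed_biInter fun f _ => isClosed_eq f.continuous continuous_const

lemma eq_bot_of_zeroLocus_eq_univ (h : zeroLocus I = univ) : I = ⊥ :=
  eq_bot_iff.2 fun f hf =>
    (TwoSidedIdeal.mem_bot _).2 <|
      ContinuousMap.ext fun x => (h ▸ mem_univ x : x ∈ zeroLocus I) f hf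

lemma mapsTo_symm_zeroLocus {𝕜 : Type*} [CommSemiring 𝕜] [StarRing A] [ContinuousStar A]
    [Algebra 𝕜 A] {β : X → A ≃⋆ₐ[𝕜] A} {hiso : ∀ x, Isometry (β x)}
    {hβ : ∀ a, Continuous fun x => β x a} {σ : X ≃ₜ X}
    (hI : ∀ f ∈ I, skewShift β hiso hβ σ f ∈ I) :
    MapsTo σ.symm (zeroLocus I) (zeroLocus I) := fun x hx f hf => by
  have h := hx _ (hI f hf)
  rwa [skewShift_apply, EmbeddingLike.map_eq_zero_iff] at h

lemma smul_mem_twoSidedIdeal [NormedAlgebra ℝ A] (φ : C(X, ℝ)) {g : C(X, A)} (hg : g ∈ I) :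
    φ • g ∈ I := by
  convert I.mul_mem_left (φ • 1) g hg using 1
  ext y
  simp

theorem mem_closure_of_forall_exists_dist_lt [CompactSpace X] [T2Space X] [NormedAlgebra ℝ A]
    {h : C(X, A)} (hloc : ∀ x, ∀ ε > 0, ∃ g ∈ I, dist (g x) (h x) < ε) :
    h ∈ closure (I : Set C(X, A)) := by
  refine Metric.mem_closure_iff.2 fun ε hε => ?_
  choose g hgI hg using fun x => hloc x ε hε
  let U : X → Set X := fun x => {y | dist (g x y) (h y) < ε}
  have hU : ∀ x, IsOpen (U x) := fun x => isOpen_lt (by fun_prop) continuous_const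
  obtain ⟨t, ht⟩ := isCompact_univ.elim_finite_subcover U hU fun y _ => mem_iUnion.2 ⟨y, hg y⟩
  obtain ⟨φ, hφ⟩ := PartitionOfUnity.exists_isSubordinate isClosed_univ (fun i : t => U i)
    (fun i => hU i) fun y _ => by simpa using ht (mem_univ y)
  refine ⟨∑ i, φ i • g i, sum_mem fun i _ => smul_mem_twoSidedIdeal _ (hgI i), ?_⟩
  rw [dist_comm, ContinuousMap.dist_lt_iff hε]
  intro y
  have hy := φ.finsum_smul_mem_convex (g := fun i y => g i y) (mem_univ y)
    (fun i hi => hφ i (subset_tsupport _ hi)) (convex_ball (h y) ε)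
  simpa [finsum_eq_sum_of_fintype, dist_comm] using hy

theorem dense_image_eval_of_ne_zero
    (hA : ∀ J : TwoSidedIdeal A, IsClosed (J : Set A) → J = ⊥ ∨ J = ⊤)
    {f : C(X, A)} (hf : f ∈ I) {x : X} (hfx : f x ≠ 0) :
    Dense ((fun g : C(X, A) => g x) '' I) := by
  let ev : C(X, A) →+* A := (Pi.evalRingHom _ x).comp coeFnRingHom
  have hsurj : Surjective ev := fun a => ⟨const X a, rfl⟩
  have hne : I.map ev ≠ ⊥ := fun h => hfx <| by
    have : f x ∈ I.map ev := (TwoSidedIdeal.mem_map_of_surjective hsurj I).2 ⟨f, hf, rfl⟩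
    rwa [h, TwoSidedIdeal.mem_bot] at this
  convert TwoSidedIdeal.dense_of_ne_bot hA hne using 1
  ext a
  exact (TwoSidedIdeal.mem_map_of_surjective hsurj I).symm

theorem eq_top_of_zeroLocus_eq_empty [CompactSpace X] [T2Space X] [NormedAlgebra ℝ A]
    (hA : ∀ J : TwoSidedIdeal A, IsClosed (J : Set A) → J = ⊥ ∨ J = ⊤)
    (hI : IsClosed (I : Set C(X, A))) (h : zeroLocus I = ∅) : I = ⊤ := by
  refine eq_top_iff.2 fun g _ => hI.closure_subset <| mem_closure_of_forall_exists_dist_lt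
    fun x ε hε => ?_
  obtain ⟨f, hf, hfx⟩ : ∃ f ∈ I, f x ≠ 0 := by
    simpa [zeroLocus] using (h ▸ notMem_empty x : x ∉ zeroLocus I)
  obtain ⟨_, ⟨g', hg', rfl⟩, hdist⟩ :=
    (dense_image_eval_of_ne_zero hA hf hfx).exists_dist_lt (g x) hε
  exact ⟨g', hg', by rwa [dist_comm]⟩

end ZeroLocus

end ContinuousMap

theorem minimal_homeomorphism_gives_alpha_simple_general
    (X : Type*) [MetricSpace X] [CompactSpace X]
    (A : Type*) [NormedRing A] [StarRing A] [CStarRing A] [NormedAlgebra ℂ A]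
    [CompleteSpace A] [StarModule ℂ A]
    (hA : ∀ I : TwoSidedIdeal A, IsClosed (I : Set A) → I = ⊥ ∨ I = ⊤)
    (σ : X ≃ₜ X)
    (hmin : ∀ Z : Set X, IsClosed Z → ⇑σ '' Z = Z → Z = ∅ ∨ Z = Set.univ)
    (β : X → (A ≃⋆ₐ[ℂ] A))
    (hβ : ∀ a : A, Continuous fun x : X => β x a) :
    ∃ α : C(X, A) ≃⋆ₐ[ℂ] C(X, A),
      (∀ (f : C(X, A)) (x : X), α f x = β (σ.symm x) (f (σ.symm x))) ∧
      (∀ I : TwoSidedIdeal C(X, A), IsClosed (I : Set C(X, A)) →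
        (∀ f ∈ I, α f ∈ I) → I = ⊥ ∨ I = ⊤) := by
  -- bundling the hypotheses on `A` makes `*`-automorphisms of `A` isometric
  let : CStarAlgebra A := {}
  refine ⟨ContinuousMap.skewShift β (fun x => StarAlgEquiv.isometry (β x)) hβ σ,
    ContinuousMap.skewShift_apply _ _ _ σ, fun I hI hinv => ?_⟩
  rcases (ContinuousMap.zeroLocus I).eq_empty_or_nonempty with h | h
  · exact Or.inr (ContinuousMap.eq_top_of_zeroLocus_eq_empty hA hI h)
  · refine Or.inl (ContinuousMap.eq_bot_of_zeroLocus_eq_univ ?_)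
    exact Homeomorph.eq_univ_of_mapsTo_symm hmin (ContinuousMap.isClosed_zeroLocus I) h
      (ContinuousMap.mapsTo_symm_zeroLocus hinv)

/-- Let `X` be a compact metric space, `A` a unital simple C*-algebra,
`σ : X → X` a minimal homeomorphism and `β` a strongly continuous map from `X` to the
*-automorphisms of `A`.  Define `α : C(X,A) → C(X,A)` by
`α f x = β_{σ⁻¹ x} (f (σ⁻¹ x))`.  Then `α` is a *-automorphism of `C(X,A)` and
`C(X,A)` is `α`-simple. -/
theorem minimal_homeomorphism_gives_alpha_simple
    (X : Type*) [MetricSpace X] [CompactSpace X]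
    (A : Type*) [NormedRing A] [StarRing A] [CStarRing A] [NormedAlgebra ℂ A]
    [CompleteSpace A] [StarModule ℂ A] [Nontrivial A]
    (hA : ∀ I : TwoSidedIdeal A, IsClosed (I : Set A) → I = ⊥ ∨ I = ⊤)
    (σ : X ≃ₜ X)
    (hmin : ∀ Z : Set X, IsClosed Z → ⇑σ '' Z = Z → Z = ∅ ∨ Z = Set.univ)
    (β : X → (A ≃⋆ₐ[ℂ] A))
    (hβ : ∀ a : A, Continuous fun x : X => β x a) :
    ∃ α : C(X, A) ≃⋆ₐ[ℂ] C(X, A),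
      (∀ (f : C(X, A)) (x : X), α f x = β (σ.symm x) (f (σ.symm x))) ∧
      (∀ I : TwoSidedIdeal C(X, A), IsClosed (I : Set C(X, A)) →
        (∀ f ∈ I, α f ∈ I) → I = ⊥ ∨ I = ⊤) :=
  minimal_homeomorphism_gives_alpha_simple_general X A hA σ hmin β hβ
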